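/- arXiv:1110.2406 — 2 statements merged into one kernel-verified Lean document; each statement's English description precedes it below -/
import Mathlib

section
/- Let {X_i}_{i∈ℤ} be an admissible inverse system with inverse limit X_∞. Then for every pair of points x, x' ∈ X_∞ there exist i ∈ ℤ and a vertex v of X_i such that both π_i^∞(x) and π_i^∞(x') lie in the closed star St(v, X_i). -/
open scoped ENNReal
open Set

/-- An admissible inverse system of directed metric graphs (Definition 1.5 of
Cheeger–Kleiner).  Each `X i` is (the geometric realization of) a directed graph,
carrying the generalized path metric `d i` in which every edge is isometric to
`[0, m⁻ⁱ]`; edges are recorded through direction-preserving arclength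
parametrizations `edgeMap i e : [0, m⁻ⁱ] → X i`; `vert i` is the vertex set of `X i`
and `vert' i` the vertex set of the `m`-fold subdivision `X i '`.  `le i` is the
partial order generated by directed paths.  The bonding maps `p i : X (i+1) → X i`
are simplicial on the subdivision, direction preserving, isometric on each edge,
and any two points of the system eventually project to the same connected
component (`jointComp`). -/
structure AdmSys where
  m : ℕ
  hm : 2 ≤ m
  X : ℤ → Type
  d : (i : ℤ) → X i → X i → ℝ≥0∞
  d_self : ∀ i x, d i x x = 0
  d_comm : ∀ i x y, d i x y = d i y x
  d_triangle : ∀ i x y z, d i x z ≤ d i x y + d i y z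
  eq_of_d : ∀ i x y, d i x y = 0 → x = y
  E : ℤ → Type
  edgeMap : (i : ℤ) → E i → ℝ → X i
  edge_isom : ∀ i (e : E i), ∀ s ∈ Icc (0:ℝ) ((m:ℝ)^(-i)), ∀ t ∈ Icc (0:ℝ) ((m:ℝ)^(-i)),
    d i (edgeMap i e s) (edgeMap i e t) = ENNReal.ofReal |s - t|
  vert : (i : ℤ) → Set (X i)
  vert' : (i : ℤ) → Set (X i)
  vert_subset_vert' : ∀ i, vert i ⊆ vert' i
  edge_src_vert : ∀ i (e : E i), edgeMap i e 0 ∈ vert i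
  edge_tgt_vert : ∀ i (e : E i), edgeMap i e ((m:ℝ)^(-i)) ∈ vert i
  edge_cover : ∀ i (x : X i), ∃ (e : E i), ∃ t ∈ Icc (0:ℝ) ((m:ℝ)^(-i)), x = edgeMap i e t
  vert'_eq : ∀ i, vert' i =
    {x | ∃ (e : E i) (k : ℕ), k ≤ m ∧ x = edgeMap i e ((k:ℝ) * (m:ℝ)^(-(i+1)))}
  le : (i : ℤ) → X i → X i → Prop
  le_rfl' : ∀ i x, le i x x
  le_trans' : ∀ i x y z, le i x y → le i y z → le i x z
  le_antisymm' : ∀ i x y, le i x y → le i y x → x = y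
  edge_mono : ∀ i (e : E i), ∀ s ∈ Icc (0:ℝ) ((m:ℝ)^(-i)), ∀ t ∈ Icc (0:ℝ) ((m:ℝ)^(-i)),
    s ≤ t → le i (edgeMap i e s) (edgeMap i e t)
  p : (i : ℤ) → X (i+1) → X i
  p_lipschitz : ∀ i x y, d i (p i x) (p i y) ≤ d (i+1) x y
  p_mono : ∀ i x y, le (i+1) x y → le i (p i x) (p i y)
  p_simplicial : ∀ i (e : E (i+1)), ∃ (e' : E i) (k : ℕ), k < m ∧
    ∀ t ∈ Icc (0:ℝ) ((m:ℝ)^(-(i+1))),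
      p i (edgeMap (i+1) e t) = edgeMap i e' ((k:ℝ) * (m:ℝ)^(-(i+1)) + t)
  nonemptyX : ∀ i, Nonempty (X i)
  proj : ∀ {i j : ℤ}, i ≤ j → X j → X i
  proj_refl : ∀ (i : ℤ) (x : X i), proj (le_refl i) x = x
  proj_succ : ∀ (i : ℤ) (x : X (i+1)), proj (by omega : i ≤ i + 1) x = p i x
  proj_trans : ∀ {i j k : ℤ} (hij : i ≤ j) (hjk : j ≤ k) (x : X k),
    proj hij (proj hjk x) = proj (hij.trans hjk) x
  jointComp : ∀ (i j : ℤ) (x : X i) (x' : X j),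
    ∃ (k : ℤ) (hki : k ≤ i) (hkj : k ≤ j), d k (proj hki x) (proj hkj x') ≠ ⊤

namespace AdmSys

variable (S : AdmSys)

/-- The inverse limit `X_∞` of the system. -/
def Limit : Type := {x : ∀ i, S.X i // ∀ i, S.p i (x (i+1)) = x i}

/-- Strict order `≺` on `X i`. -/
def lt (i : ℤ) (x y : S.X i) : Prop := S.le i x y ∧ x ≠ y

/-- The closed star of a vertex `v` of `X i`: the closed ball of radius `m⁻ⁱ` about `v`
in the path metric (equivalently, the union of the closed edges containing `v`). -/
def star (i : ℤ) (v : S.X i) : Set (S.X i) :=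
  {x | S.d i v x ≤ ENNReal.ofReal ((S.m:ℝ)^(-i))}

/-- The trimmed star of a vertex `v` of `X i`: the closed ball of radius
`((m-1)/m)·m⁻ⁱ` about `v` in the path metric. -/
def tstar (i : ℤ) (v : S.X i) : Set (S.X i) :=
  {x | S.d i v x ≤ ENNReal.ofReal (((S.m:ℝ) - 1) / (S.m:ℝ) * (S.m:ℝ)^(-i))}

/-- The open star of a vertex `v` of the subdivision `X i '`: the open ball of radius
`m^{-(i+1)}` about `v`. -/
def ostar' (i : ℤ) (v : S.X i) : Set (S.X i) :=
  {x | S.d i v x < ENNReal.ofReal ((S.m:ℝ)^(-(i+1)))}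

/-- A pseudo-distance on the inverse limit such that the preimage of every closed star
of a vertex of `X j` has diameter at most `2·m⁻ʲ`. -/
def IsAdmPseudo (dd : S.Limit → S.Limit → ℝ) : Prop :=
  (∀ x, dd x x = 0) ∧ (∀ x y, 0 ≤ dd x y) ∧ (∀ x y, dd x y = dd y x) ∧
  (∀ x y z, dd x z ≤ dd x y + dd y z) ∧
  ∀ (j : ℤ) (v : S.X j), v ∈ S.vert j → ∀ x y : S.Limit,
    x.1 j ∈ S.star j v → y.1 j ∈ S.star j v → dd x y ≤ 2 * (S.m:ℝ)^(-j)

/-- `d̄_∞`: the supremal pseudo-distance on `X_∞` for which preimages of closed stars of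
vertices of `X j` have diameter at most `2 m⁻ʲ`, for all `j`. -/
noncomputable def dbar (x y : S.Limit) : ℝ :=
  sSup {r | ∃ dd, S.IsAdmPseudo dd ∧ r = dd x y}

end AdmSys

lemma AdmSys.proj_apply (S : AdmSys) {i k : ℤ} (h : i ≤ k) (x : S.Limit) :
    S.proj h (x.1 k) = x.1 i := by
  refine Int.le_induction (motive := fun n _ => ∀ hn : i ≤ n, S.proj hn (x.1 n) = x.1 i)
    (fun _ => S.proj_refl i (x.1 i)) ?_ k h h
  intro n hn ih h'
  have h1 : S.proj h' (x.1 (n+1))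
      = S.proj hn (S.proj (show n ≤ n+1 by omega) (x.1 (n+1))) :=
    (S.proj_trans hn (show n ≤ n+1 by omega) _).symm
  rw [h1, S.proj_succ, x.2 n, ih hn]

lemma AdmSys.proj_lip (S : AdmSys) {i k : ℤ} (h : i ≤ k) :
    ∀ a b : S.X k, S.d i (S.proj h a) (S.proj h b) ≤ S.d k a b := by
  refine Int.le_induction
    (motive := fun n _ => ∀ hn : i ≤ n, ∀ a b : S.X n, S.d i (S.proj hn a) (S.proj hn b) ≤ S.d n a b)
    (fun _ a b => by rw [S.proj_refl, S.proj_refl]) ?_ k h h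
  intro n hn ih h' a b
  have e1 : S.proj h' a = S.proj hn (S.proj (show n ≤ n+1 by omega) a) :=
    (S.proj_trans hn (show n ≤ n+1 by omega) _).symm
  have e2 : S.proj h' b = S.proj hn (S.proj (show n ≤ n+1 by omega) b) :=
    (S.proj_trans hn (show n ≤ n+1 by omega) _).symm
  rw [e1, e2]
  refine le_trans (ih hn _ _) ?_
  rw [S.proj_succ, S.proj_succ]
  exact S.p_lipschitz n a b

/-- Lemma 2.2: for every pair of points `x, x'` of the inverse limit of an
admissible inverse system there exist `i : ℤ` and a vertex `v` of `X i` such that both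
projections lie in the closed star `St(v, X i)`. -/
theorem AdmSys.exists_common_star (S : AdmSys) (x x' : S.Limit) :
    ∃ (i : ℤ) (v : S.X i), v ∈ S.vert i ∧ x.1 i ∈ S.star i v ∧ x'.1 i ∈ S.star i v := by
  obtain ⟨k, hk0, hk0', hfin⟩ := S.jointComp 0 0 (x.1 0) (x'.1 0)
  rw [S.proj_apply, S.proj_apply] at hfin
  set D := S.d k (x.1 k) (x'.1 k) with hD
  obtain ⟨N, hN⟩ := exists_nat_ge (2 * D.toReal)
  set i : ℤ := k - N with hi
  have hik : i ≤ k := by omega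
  set r : ℝ := (S.m : ℝ) ^ (-i) with hr
  have hm2 : (2:ℝ) ≤ S.m := by exact_mod_cast S.hm
  have hm1 : (1:ℝ) ≤ S.m := by linarith
  have hrpos : 0 < r := zpow_pos (by linarith) _
  have hrge : 2 * D.toReal ≤ r := by
    have h1 : (N:ℝ) ≤ (2:ℝ)^N := by
      exact_mod_cast (Nat.lt_two_pow_self (n := N)).le
    have h2 : (2:ℝ)^N ≤ (S.m:ℝ)^N := pow_le_pow_left₀ (by norm_num) hm2 N
    have h3 : (S.m:ℝ)^(N:ℤ) ≤ (S.m:ℝ)^(-i) := by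
      apply zpow_le_zpow_right₀ hm1
      omega
    rw [zpow_natCast] at h3
    calc 2 * D.toReal ≤ (N:ℝ) := hN
      _ ≤ (S.m:ℝ)^N := le_trans h1 h2
      _ ≤ r := h3
  have hDle : D ≤ ENNReal.ofReal (r/2) := by
    rw [ENNReal.le_ofReal_iff_toReal_le hfin (by linarith)]
    linarith
  have hlip : S.d i (x.1 i) (x'.1 i) ≤ D := by
    have h := S.proj_lip hik (x.1 k) (x'.1 k)
    rwa [S.proj_apply, S.proj_apply] at h
  obtain ⟨e, t, ht, hxt⟩ := S.edge_cover i (x.1 i)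
  have honem : (0:ℝ) ∈ Icc (0:ℝ) ((S.m:ℝ)^(-i)) := ⟨le_refl 0, hrpos.le⟩
  have hrmem : ((S.m:ℝ)^(-i)) ∈ Icc (0:ℝ) ((S.m:ℝ)^(-i)) := ⟨hrpos.le, le_refl _⟩
  -- the key step: find a vertex v within r/2 of x.1 i
  have key : ∃ v : S.X i, v ∈ S.vert i ∧ S.d i v (x.1 i) ≤ ENNReal.ofReal (r/2) := by
    by_cases htr : t ≤ r/2
    · refine ⟨S.edgeMap i e 0, S.edge_src_vert i e, ?_⟩
      rw [hxt, S.edge_isom i e 0 honem t ht]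
      apply ENNReal.ofReal_le_ofReal
      rw [abs_of_nonpos (by linarith [ht.1])]
      linarith
    · refine ⟨S.edgeMap i e ((S.m:ℝ)^(-i)), S.edge_tgt_vert i e, ?_⟩
      rw [hxt, S.edge_isom i e _ hrmem t ht]
      apply ENNReal.ofReal_le_ofReal
      rw [abs_of_nonneg (by linarith [ht.2])]
      push_neg at htr
      have : t ≤ (S.m:ℝ)^(-i) := ht.2
      rw [← hr] at this ⊢
      linarith
  obtain ⟨v, hv, hvx⟩ := key
  refine ⟨i, v, hv, ?_, ?_⟩
  · show S.d i v (x.1 i) ≤ ENNReal.ofReal ((S.m:ℝ)^(-i))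
    rw [← hr]
    exact le_trans hvx (ENNReal.ofReal_le_ofReal (by linarith))
  · show S.d i v (x'.1 i) ≤ ENNReal.ofReal ((S.m:ℝ)^(-i))
    rw [← hr]
    calc S.d i v (x'.1 i) ≤ S.d i v (x.1 i) + S.d i (x.1 i) (x'.1 i) :=
          S.d_triangle i v (x.1 i) (x'.1 i)
      _ ≤ ENNReal.ofReal (r/2) + ENNReal.ofReal (r/2) :=
          add_le_add hvx (le_trans hlip hDle)
      _ = ENNReal.ofReal r := by
          rw [← ENNReal.ofReal_add (by linarith) (by linarith)]
          ring_nf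
end

section
/- Let {X_i} be an admissible inverse system with parameter m ≥ 2 and let d̄_∞ be the associated supremal pseudo-distance on X_∞. Then d̄_∞ is a genuine metric: d̄_∞(x, x') = 0 implies x = x'. -/
open scoped ENNReal
open Set

namespace AdmSys

variable (S : AdmSys)

lemma mpos : (0:ℝ) < (S.m:ℝ) := by
  have := S.hm
  have : (0:ℕ) < S.m := by omega
  exact_mod_cast this

lemma one_le_m : (1:ℝ) ≤ (S.m:ℝ) := by
  have := S.hm
  have : (1:ℕ) ≤ S.m := by omega
  exact_mod_cast this

lemma zpowPos (j : ℤ) : (0:ℝ) < (S.m:ℝ)^(-j) := zpow_pos S.mpos _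

lemma zpow_anti {j j' : ℤ} (h : j ≤ j') : (S.m:ℝ)^(-j') ≤ (S.m:ℝ)^(-j) :=
  zpow_le_zpow_right₀ S.one_le_m (by omega)

lemma proj_limit (x : S.Limit) {i j : ℤ} (h : i ≤ j) : S.proj h (x.1 j) = x.1 i := by
  have key : ∀ j : ℤ, i ≤ j → ∀ h : i ≤ j, S.proj h (x.1 j) = x.1 i := by
    refine Int.le_induction (motive := fun j _ => ∀ h : i ≤ j, S.proj h (x.1 j) = x.1 i) ?_ ?_
    · intro _; exact S.proj_refl i (x.1 i)
    · intro j hij ih _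
      have hjk : j ≤ j + 1 := by omega
      have e1 : S.proj hjk (x.1 (j+1)) = x.1 j :=
        (S.proj_succ j (x.1 (j+1))).trans (x.2 j)
      have e2 := (S.proj_trans hij hjk (x.1 (j+1))).symm
      rw [e1] at e2
      exact e2.trans (ih hij)
  exact key j h h

lemma d_mono (x y : S.Limit) {i j : ℤ} (h : i ≤ j) :
    S.d i (x.1 i) (y.1 i) ≤ S.d j (x.1 j) (y.1 j) := by
  refine Int.le_induction
    (motive := fun j _ => S.d i (x.1 i) (y.1 i) ≤ S.d j (x.1 j) (y.1 j)) ?_ ?_ j h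
  · exact le_rfl
  · intro j _ ih
    refine ih.trans ?_
    have hl := S.p_lipschitz j (x.1 (j+1)) (y.1 (j+1))
    rw [x.2 j, y.2 j] at hl
    exact hl

lemma min_add_le (a b c : ℝ≥0∞) : min a (b + c) ≤ min a b + min a c := by
  rcases le_total a b with h | h
  · calc min a (b + c) ≤ min a b := by rw [min_eq_left h]; exact min_le_left _ _
      _ ≤ min a b + min a c := le_self_add
  · rcases le_total a c with h' | h'
    · calc min a (b + c) ≤ min a c := by rw [min_eq_left h']; exact min_le_left _ _
        _ ≤ min a b + min a c := le_add_self
    · calc min a (b + c) ≤ b + c := min_le_right _ _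
        _ = min a b + min a c := by rw [min_eq_right h, min_eq_right h']

/-- The `j`-th term of the explicit admissible pseudo-distance. -/
noncomputable def term (x y : S.Limit) (j : ℤ) : ℝ≥0∞ :=
  min (ENNReal.ofReal (2*(S.m:ℝ)^(-j))) (S.d j (x.1 j) (y.1 j))

/-- The explicit admissible pseudo-distance (as an extended real). -/
noncomputable def Dlim (x y : S.Limit) : ℝ≥0∞ := ⨆ j : ℤ, S.term x y j

lemma term_le_of_d_le (x y : S.Limit) {j : ℤ}
    (hd : S.d j (x.1 j) (y.1 j) ≤ ENNReal.ofReal (2*(S.m:ℝ)^(-j))) (j' : ℤ) :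
    S.term x y j' ≤ ENNReal.ofReal (2*(S.m:ℝ)^(-j)) := by
  rcases le_total j' j with hle | hle
  · exact (min_le_right _ _).trans ((S.d_mono x y hle).trans hd)
  · refine (min_le_left _ _).trans (ENNReal.ofReal_le_ofReal ?_)
    have := S.zpow_anti hle
    linarith

lemma Dlim_le_of_d_le (x y : S.Limit) {j : ℤ}
    (hd : S.d j (x.1 j) (y.1 j) ≤ ENNReal.ofReal (2*(S.m:ℝ)^(-j))) :
    S.Dlim x y ≤ ENNReal.ofReal (2*(S.m:ℝ)^(-j)) :=
  iSup_le (S.term_le_of_d_le x y hd)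

lemma Dlim_ne_top (x y : S.Limit) : S.Dlim x y ≠ ⊤ := by
  obtain ⟨k, hk1, hk2, hfin⟩ := S.jointComp 0 0 (x.1 0) (y.1 0)
  rw [S.proj_limit x hk1, S.proj_limit y hk2] at hfin
  have hb : S.Dlim x y ≤ max (S.d k (x.1 k) (y.1 k)) (ENNReal.ofReal (2*(S.m:ℝ)^(-k))) := by
    refine iSup_le fun j => ?_
    rcases le_total j k with hle | hle
    · exact le_max_of_le_left ((min_le_right _ _).trans (S.d_mono x y hle))
    · refine le_max_of_le_right ((min_le_left _ _).trans (ENNReal.ofReal_le_ofReal ?_))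
      have := S.zpow_anti hle
      linarith
  exact ne_top_of_le_ne_top (max_lt hfin.lt_top ENNReal.ofReal_lt_top).ne hb

lemma isAdmPseudo_toReal_Dlim : S.IsAdmPseudo (fun x y => (S.Dlim x y).toReal) := by
  refine ⟨?_, ?_, ?_, ?_, ?_⟩
  · intro x
    have : S.Dlim x x = 0 := by
      refine le_antisymm (iSup_le fun j => ?_) zero_le
      rw [term, S.d_self]
      exact min_le_right _ _
    simp [this]
  · intro x y; exact ENNReal.toReal_nonneg
  · intro x y
    have : S.Dlim x y = S.Dlim y x := iSup_congr fun j => by rw [term, term, S.d_comm]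
    show (S.Dlim x y).toReal = (S.Dlim y x).toReal
    rw [this]
  · intro x y z
    have h1 : S.Dlim x z ≤ S.Dlim x y + S.Dlim y z := by
      refine iSup_le fun j => ?_
      calc S.term x z j
          ≤ min (ENNReal.ofReal (2*(S.m:ℝ)^(-j)))
              (S.d j (x.1 j) (y.1 j) + S.d j (y.1 j) (z.1 j)) :=
            min_le_min le_rfl (S.d_triangle j _ _ _)
        _ ≤ S.term x y j + S.term y z j := AdmSys.min_add_le _ _ _
        _ ≤ S.Dlim x y + S.Dlim y z :=
            add_le_add (le_iSup (S.term x y) j) (le_iSup (S.term y z) j)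
    have hfin : S.Dlim x y + S.Dlim y z ≠ ⊤ :=
      ENNReal.add_ne_top.2 ⟨S.Dlim_ne_top x y, S.Dlim_ne_top y z⟩
    calc (S.Dlim x z).toReal ≤ (S.Dlim x y + S.Dlim y z).toReal :=
          (ENNReal.toReal_le_toReal (ne_top_of_le_ne_top hfin h1) hfin).mpr h1
      _ = (S.Dlim x y).toReal + (S.Dlim y z).toReal :=
          ENNReal.toReal_add (S.Dlim_ne_top x y) (S.Dlim_ne_top y z)
  · intro j v _ a b ha hb
    have ha' : S.d j v (a.1 j) ≤ ENNReal.ofReal ((S.m:ℝ)^(-j)) := ha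
    have hb' : S.d j v (b.1 j) ≤ ENNReal.ofReal ((S.m:ℝ)^(-j)) := hb
    have hd : S.d j (a.1 j) (b.1 j) ≤ ENNReal.ofReal (2*(S.m:ℝ)^(-j)) := by
      calc S.d j (a.1 j) (b.1 j) ≤ S.d j (a.1 j) v + S.d j v (b.1 j) := S.d_triangle j _ _ _
        _ = S.d j v (a.1 j) + S.d j v (b.1 j) := by rw [S.d_comm]
        _ ≤ ENNReal.ofReal ((S.m:ℝ)^(-j)) + ENNReal.ofReal ((S.m:ℝ)^(-j)) := add_le_add ha' hb'
        _ = ENNReal.ofReal (2*(S.m:ℝ)^(-j)) := by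
            rw [← ENNReal.ofReal_add (S.zpowPos j).le (S.zpowPos j).le]
            ring_nf
    exact ENNReal.toReal_le_of_le_ofReal
      (by have := S.zpowPos j; linarith) (S.Dlim_le_of_d_le a b hd)

end AdmSys

/-- Corollary 2.5: the supremal pseudo-distance `d̄_∞` on the inverse
limit of an admissible inverse system is a genuine metric: `d̄_∞(x, x') = 0 → x = x'`. -/
theorem AdmSys.dbar_eq_zero_iff (S : AdmSys) (x x' : S.Limit)
    (h : S.dbar x x' = 0) : x = x' := by
  obtain ⟨k, hk1, hk2, hfin⟩ := S.jointComp 0 0 (x.1 0) (x'.1 0)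
  rw [S.proj_limit x hk1, S.proj_limit x' hk2] at hfin
  obtain ⟨n, hn⟩ := pow_unbounded_of_one_lt (2*(S.d k (x.1 k) (x'.1 k)).toReal * (S.m:ℝ)^k)
    (by have := S.hm; exact_mod_cast by omega : (1:ℝ) < (S.m:ℝ))
  set j : ℤ := k - n with hjdef
  have hjk : j ≤ k := by omega
  set M : ℝ := (S.m:ℝ)^(-j) with hMdef
  have hMpos : 0 < M := S.zpowPos j
  have hMj : 2*(S.d k (x.1 k) (x'.1 k)).toReal ≤ M := by
    have hmk : (0:ℝ) < (S.m:ℝ)^k := zpow_pos S.mpos _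
    have hMeq : M = (S.m:ℝ)^(n:ℤ) / (S.m:ℝ)^k := by
      rw [hMdef, hjdef, neg_sub, zpow_sub₀ (ne_of_gt S.mpos)]
    rw [hMeq, le_div_iff₀ hmk, zpow_natCast]
    exact hn.le
  -- a vertex whose star contains both projections at level j
  obtain ⟨e, t, ht, hxt⟩ := S.edge_cover j (x.1 j)
  have hvex : ∃ v ∈ S.vert j, S.d j v (x.1 j) ≤ ENNReal.ofReal (M/2) := by
    rcases le_total t (M/2) with hth | hth
    · refine ⟨S.edgeMap j e 0, S.edge_src_vert j e, ?_⟩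
      rw [hxt, S.edge_isom j e 0 ⟨le_rfl, hMpos.le⟩ t ht]
      exact ENNReal.ofReal_le_ofReal (by rw [abs_of_nonpos (by linarith [ht.1])]; linarith [ht.1])
    · refine ⟨S.edgeMap j e M, S.edge_tgt_vert j e, ?_⟩
      rw [hxt, S.edge_isom j e M ⟨hMpos.le, le_rfl⟩ t ht]
      exact ENNReal.ofReal_le_ofReal (by rw [abs_of_nonneg (by linarith [ht.2])]; linarith [ht.2])
  obtain ⟨v, hv, hvd⟩ := hvex
  have hstar_x : x.1 j ∈ S.star j v :=
    hvd.trans (ENNReal.ofReal_le_ofReal (by linarith))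
  have hstar_x' : x'.1 j ∈ S.star j v := by
    have hdj : S.d j (x.1 j) (x'.1 j) ≤ ENNReal.ofReal (M/2) := by
      refine (S.d_mono x x' hjk).trans ?_
      rw [← ENNReal.ofReal_toReal hfin]
      exact ENNReal.ofReal_le_ofReal (by linarith)
    show S.d j v (x'.1 j) ≤ ENNReal.ofReal M
    calc S.d j v (x'.1 j) ≤ S.d j v (x.1 j) + S.d j (x.1 j) (x'.1 j) := S.d_triangle j _ _ _
      _ ≤ ENNReal.ofReal (M/2) + ENNReal.ofReal (M/2) := add_le_add hvd hdj
      _ = ENNReal.ofReal M := by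
          rw [← ENNReal.ofReal_add (by linarith) (by linarith), add_halves]
  -- the set defining dbar is bounded above
  have hbdd : BddAbove {r | ∃ dd, S.IsAdmPseudo dd ∧ r = dd x x'} := by
    refine ⟨2 * (S.m:ℝ)^(-j), ?_⟩
    rintro r ⟨dd, hdd, rfl⟩
    exact hdd.2.2.2.2 j v hv x x' hstar_x hstar_x'
  have hmem : (S.Dlim x x').toReal ∈ {r | ∃ dd, S.IsAdmPseudo dd ∧ r = dd x x'} :=
    ⟨fun a b => (S.Dlim a b).toReal, S.isAdmPseudo_toReal_Dlim, rfl⟩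
  have hle : (S.Dlim x x').toReal ≤ 0 := by
    have := le_csSup hbdd hmem
    rwa [show sSup {r | ∃ dd, S.IsAdmPseudo dd ∧ r = dd x x'} = S.dbar x x' from rfl, h] at this
  have hD0 : S.Dlim x x' = 0 := by
    have h0 : (S.Dlim x x').toReal = 0 := le_antisymm hle ENNReal.toReal_nonneg
    rcases (ENNReal.toReal_eq_zero_iff _).mp h0 with h0 | h0
    · exact h0
    · exact absurd h0 (S.Dlim_ne_top x x')
  refine Subtype.ext (funext fun i => ?_)
  have hterm : S.term x x' i = 0 :=
    le_antisymm (hD0 ▸ le_iSup (S.term x x') i) zero_le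
  refine S.eq_of_d i _ _ ?_
  by_contra hne
  have h1 : 0 < S.d i (x.1 i) (x'.1 i) := pos_iff_ne_zero.mpr hne
  have h2 : 0 < ENNReal.ofReal (2*(S.m:ℝ)^(-i)) :=
    ENNReal.ofReal_pos.mpr (by have := S.zpowPos i; linarith)
  have := lt_min h2 h1
  rw [show min (ENNReal.ofReal (2*(S.m:ℝ)^(-i))) (S.d i (x.1 i) (x'.1 i)) = S.term x x' i from rfl,
    hterm] at this
  exact lt_irrefl _ this
end
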